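/- Let E be a group and N a normal subgroup of E with N contained in both the center Z(E) and the derived subgroup [E,E] of E. If the quotient group E/N is finitely generated, then E is finitely generated. -/

import Mathlib

/-!
Lift a finite generating set of `E ⧸ N` to `E`; it generates a subgroup `H` with `H ⊔ N = ⊤`.
Since `N` is central, commutators of `E = H N` are commutators of `H`, so `[E, E] ≤ H`;
as `N ≤ [E, E]`, this forces `H = ⊤`.
-/

open scoped commutatorElement

namespace Subgroup

variable {G : Type*} [Group G]

theorem commutatorElement_mul_left_of_mem_center {z : G} (hz : z ∈ center G) (a b : G) :
    ⁅a * z, b⁆ = ⁅a, b⁆ := by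
  rw [commutatorElement_def, commutatorElement_def, mul_inv_rev, mul_assoc a z b,
    ← mem_center_iff.mp hz b]
  group

theorem commutatorElement_mul_right_of_mem_center {z : G} (hz : z ∈ center G) (a b : G) :
    ⁅a, b * z⁆ = ⁅a, b⁆ := by
  rw [← commutatorElement_inv, commutatorElement_mul_left_of_mem_center hz,
    commutatorElement_inv]

theorem commutator_le_of_sup_center_eq_top {H : Subgroup G} (hH : H ⊔ center G = ⊤) :
    _root_.commutator G ≤ H := by
  rw [_root_.commutator_def, ← hH, commutator_le]
  intro g₁ hg₁ g₂ hg₂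
  obtain ⟨h₁, hh₁, z₁, hz₁, rfl⟩ := mem_sup_of_normal_right.mp hg₁
  obtain ⟨h₂, hh₂, z₂, hz₂, rfl⟩ := mem_sup_of_normal_right.mp hg₂
  rw [commutatorElement_mul_left_of_mem_center hz₁,
    commutatorElement_mul_right_of_mem_center hz₂]
  exact H.commutator_le_self (commutator_mem_commutator hh₁ hh₂)

theorem eq_top_of_sup_eq_top_of_le_center_inf_commutator {H N : Subgroup G}
    (hN : N ≤ center G ⊓ _root_.commutator G) (hHN : H ⊔ N = ⊤) : H = ⊤ := by
  have hHZ : H ⊔ center G = ⊤ := top_le_iff.mp (hHN ▸ sup_le_sup_left (hN.trans inf_le_left) H)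
  have hNH : N ≤ H := (hN.trans inf_le_right).trans (commutator_le_of_sup_center_eq_top hHZ)
  rwa [sup_eq_left.mpr hNH] at hHN

theorem exists_fg_sup_eq_top_of_fg_quotient (N : Subgroup G) [N.Normal] [Group.FG (G ⧸ N)] :
    ∃ H : Subgroup G, H.FG ∧ H ⊔ N = ⊤ := by
  obtain ⟨S, hS, hSfin⟩ := Group.fg_iff.mp ‹Group.FG (G ⧸ N)›
  refine ⟨closure (Quotient.out '' S), (fg_iff _).mpr ⟨_, rfl, hSfin.image _⟩, ?_⟩
  have hmap : (closure (Quotient.out '' S)).map (QuotientGroup.mk' N) = ⊤ := by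
    rw [MonoidHom.map_closure, Set.image_image]
    simpa using hS
  simpa [comap_map_eq] using congrArg (comap (QuotientGroup.mk' N)) hmap

end Subgroup

/-- Every stem extension of a finitely generated group is
finitely generated: if `N` is a normal subgroup of `E` contained in both the
center `Z(E)` and the derived subgroup `[E,E]`, and `E ⧸ N` is finitely
generated, then `E` is finitely generated. -/
theorem stem_extension_fg
    {E : Type*} [Group E] (N : Subgroup E) [N.Normal]
    (hN : N ≤ Subgroup.center E ⊓ commutator E)
    (hQ : Group.FG (E ⧸ N)) :
    Group.FG E := by
  obtain ⟨H, hH, hHN⟩ := Subgroup.exists_fg_sup_eq_top_of_fg_quotient N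
  rw [Subgroup.eq_top_of_sup_eq_top_of_le_center_inf_commutator hN hHN] at hH
  exact Group.fg_def.mpr hH
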